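/- arXiv:math/0503224 — 12 statements merged into one kernel-verified Lean document; each statement's English description precedes it below -/
import Mathlib

section
/- For all N×N complex matrices P, Q, R, the product • is associative: (P • Q) • R = P • (Q • R); the triple product has entries ((P • Q) • R)_{il} = Σ_{j,k : ⟨i ≤ j ≤ k ≤ l⟩} P_{ij} Q_{jk} R_{kl}; and the identity matrix is a two-sided unit: I • P = P • I = P. Thus (M_N(ℂ), +, •) is an associative unital ℂ-algebra. -/
/-
Associativity reduces to a statement about index patterns: both `⟨i ≤ k ≤ l⟩ ∧ ⟨i ≤ j ≤ k⟩` and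
`⟨i ≤ j ≤ l⟩ ∧ ⟨j ≤ k ≤ l⟩` are equivalent to `⟨i ≤ j ≤ k ≤ l⟩`, so both bracketings expand to
the same double sum over cyclically ordered quadruples. The unit property holds because
`⟨i ≤ i ≤ k⟩` and `⟨i ≤ k ≤ k⟩` always hold.
-/

open Matrix BigOperators Finset

/-- `cyc3 i j k` : the sequence `(i,j,k)` of indices is cyclically ordered `⟨i ≤ j ≤ k⟩`,
i.e. some cyclic rotation of it is weakly increasing, with all entries required to be
equal when the first and last entries coincide. -/
def cyc3 {N : ℕ} (i j k : Fin N) : Prop :=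
  if i = k then j = i
  else (i ≤ j ∧ j ≤ k) ∨ (j ≤ k ∧ k ≤ i) ∨ (k ≤ i ∧ i ≤ j)

instance cyc3.dec {N : ℕ} (i j k : Fin N) : Decidable (cyc3 i j k) := by
  unfold cyc3; infer_instance

/-- The degenerate product `•` on `N × N` complex matrices:
`(P • Q)_{ik} = ∑_{j : ⟨i ≤ j ≤ k⟩} P_{ij} Q_{jk}`. -/
noncomputable def cprod {N : ℕ} (P Q : Matrix (Fin N) (Fin N) ℂ) :
    Matrix (Fin N) (Fin N) ℂ :=
  Matrix.of fun i k => ∑ j ∈ Finset.univ.filter (fun j => cyc3 i j k), P i j * Q j k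

/-- `cyc4 i j k l` : the sequence `(i,j,k,l)` is cyclically ordered `⟨i ≤ j ≤ k ≤ l⟩`. -/
def cyc4 {N : ℕ} (i j k l : Fin N) : Prop :=
  if i = l then j = i ∧ k = i
  else (i ≤ j ∧ j ≤ k ∧ k ≤ l) ∨ (j ≤ k ∧ k ≤ l ∧ l ≤ i) ∨
       (k ≤ l ∧ l ≤ i ∧ i ≤ j) ∨ (l ≤ i ∧ i ≤ j ∧ j ≤ k)

instance cyc4.dec {N : ℕ} (i j k l : Fin N) : Decidable (cyc4 i j k l) := by
  unfold cyc4; infer_instance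

section CyclicOrder

variable {N : ℕ} (i j k l : Fin N)

lemma cyc4_iff_cyc3_and_cyc3_left : cyc4 i j k l ↔ cyc3 i k l ∧ cyc3 i j k := by
  unfold cyc3 cyc4
  simp only [Fin.ext_iff, Fin.le_def]
  split_ifs <;> omega

lemma cyc4_iff_cyc3_and_cyc3_right : cyc4 i j k l ↔ cyc3 i j l ∧ cyc3 j k l := by
  unfold cyc3 cyc4
  simp only [Fin.ext_iff, Fin.le_def]
  split_ifs <;> omega

lemma cyc3_self_left : cyc3 i i k := by
  unfold cyc3
  simp only [Fin.ext_iff, Fin.le_def]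
  split_ifs; omega

lemma cyc3_self_right : cyc3 i k k := by
  unfold cyc3
  simp only [Fin.ext_iff, Fin.le_def]
  split_ifs <;> omega

end CyclicOrder

section Product

variable {N : ℕ} (P Q R : Matrix (Fin N) (Fin N) ℂ)

lemma cprod_apply (i k : Fin N) :
    cprod P Q i k = ∑ j, if cyc3 i j k then P i j * Q j k else 0 := by
  simp only [cprod, of_apply, sum_filter]

lemma cprod_cprod_apply_left (i l : Fin N) :
    cprod (cprod P Q) R i l =
      ∑ j, ∑ k, if cyc4 i j k l then P i j * Q j k * R k l else 0 := by
  simp only [cprod_apply, sum_mul, ite_mul, zero_mul, cyc4_iff_cyc3_and_cyc3_left, ite_and]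
  rw [sum_comm]
  simp only [ite_sum_zero]

lemma cprod_cprod_apply_right (i l : Fin N) :
    cprod P (cprod Q R) i l =
      ∑ j, ∑ k, if cyc4 i j k l then P i j * Q j k * R k l else 0 := by
  simp only [cprod_apply, mul_sum, mul_ite, mul_zero, mul_assoc, cyc4_iff_cyc3_and_cyc3_right,
    ite_and, ite_sum_zero]

theorem cprod_assoc : cprod (cprod P Q) R = cprod P (cprod Q R) := by
  ext i l
  rw [cprod_cprod_apply_left, cprod_cprod_apply_right]

theorem one_cprod : cprod 1 P = P := by
  ext i k
  rw [cprod_apply, sum_eq_single i]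
  · simp [cyc3_self_left]
  · intro j _ hji
    simp [one_apply_ne' hji]
  · simp

theorem cprod_one : cprod P 1 = P := by
  ext i k
  rw [cprod_apply, sum_eq_single k]
  · simp [cyc3_self_right]
  · intro j _ hjk
    simp [one_apply_ne hjk]
  · simp

theorem add_cprod : cprod (P + Q) R = cprod P R + cprod Q R := by
  ext i k
  simp only [cprod_apply, Matrix.add_apply, add_mul, ← sum_add_distrib, ite_add_ite, add_zero]

theorem cprod_add : cprod R (P + Q) = cprod R P + cprod R Q := by
  ext i k
  simp only [cprod_apply, Matrix.add_apply, mul_add, ← sum_add_distrib, ite_add_ite, add_zero]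

theorem smul_cprod (c : ℂ) : cprod (c • P) Q = c • cprod P Q := by
  ext i k
  simp only [cprod_apply, Matrix.smul_apply, smul_eq_mul, mul_sum, mul_ite, mul_zero, mul_assoc]

theorem cprod_smul (c : ℂ) : cprod P (c • Q) = c • cprod P Q := by
  ext i k
  simp only [cprod_apply, Matrix.smul_apply, smul_eq_mul, mul_sum, mul_ite, mul_zero,
    mul_left_comm c]

end Product

theorem brauer_cprod_assoc_unital_general (N : ℕ)
    (P Q R : Matrix (Fin N) (Fin N) ℂ) :
    cprod (cprod P Q) R = cprod P (cprod Q R) ∧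
    (∀ i l : Fin N, cprod (cprod P Q) R i l =
      ∑ j : Fin N, ∑ k : Fin N, if cyc4 i j k l then P i j * Q j k * R k l else 0) ∧
    cprod 1 P = P ∧ cprod P 1 = P ∧
    cprod (P + Q) R = cprod P R + cprod Q R ∧
    cprod R (P + Q) = cprod R P + cprod R Q ∧
    (∀ c : ℂ, cprod (c • P) Q = c • cprod P Q ∧ cprod P (c • Q) = c • cprod P Q) :=
  ⟨cprod_assoc P Q R, cprod_cprod_apply_left P Q R, one_cprod P, cprod_one P,
    add_cprod P Q R, cprod_add P Q R, fun c => ⟨smul_cprod P Q c, cprod_smul P Q c⟩⟩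

/-- The product `•` is associative, its triple product has entries
`((P • Q) • R)_{il} = ∑_{j,k : ⟨i ≤ j ≤ k ≤ l⟩} P_{ij} Q_{jk} R_{kl}`, the identity matrix
is a two-sided unit, and together with addition and scalar multiplication this makes
`(M_N(ℂ), +, •)` an associative unital `ℂ`-algebra. -/
theorem brauer_cprod_assoc_unital (N : ℕ) (hN : 0 < N)
    (P Q R : Matrix (Fin N) (Fin N) ℂ) :
    cprod (cprod P Q) R = cprod P (cprod Q R) ∧
    (∀ i l : Fin N, cprod (cprod P Q) R i l =
      ∑ j : Fin N, ∑ k : Fin N, if cyc4 i j k l then P i j * Q j k * R k l else 0) ∧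
    cprod 1 P = P ∧ cprod P 1 = P ∧
    cprod (P + Q) R = cprod P R + cprod Q R ∧
    cprod R (P + Q) = cprod R P + cprod R Q ∧
    (∀ c : ℂ, cprod (c • P) Q = c • cprod P Q ∧ cprod P (c • Q) = c • cprod P Q) :=
  brauer_cprod_assoc_unital_general N P Q R
end

section
/- Define the strip array of M ∈ M_N(ℂ) by Φ(M)_{ij} = M_{(i mod N),(j mod N)} for integers i, j with 0 ≤ j − i < N (residues mod N taken in {1,…,N}). Then for all P, Q ∈ M_N(ℂ) and all integers i, k with 0 ≤ k − i < N, one has Φ(P • Q)_{ik} = Σ_{j = i}^{k} Φ(P)_{ij} Φ(Q)_{jk}. Moreover Φ is injective and Φ(M)_{ij} = Φ(M)_{i+N, j+N} for all such i, j. (This realizes (M_N(ℂ), •) as the periodic strips inside the quotient of the ring of ℤ×ℤ upper triangular matrices by the ideal generated by the N-th power of the shift.) -/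
open Matrix BigOperators Finset

/-- Reduction of an integer modulo `N`, landing in `Fin N`. -/
def finOfInt (N : ℕ) [NeZero N] (i : ℤ) : Fin N :=
  ⟨(i % (N : ℤ)).toNat, by
    have h0 : 0 < (N : ℤ) := by exact_mod_cast Nat.pos_of_ne_zero (NeZero.ne N)
    have h1 : 0 ≤ i % (N : ℤ) := Int.emod_nonneg i h0.ne'
    have h2 : i % (N : ℤ) < N := Int.emod_lt_of_pos i h0
    omega⟩

/-- The strip array of `M`: `Φ(M)_{ij} = M_{(i mod N),(j mod N)}` for integers `i, j`. -/
noncomputable def stripPhi (N : ℕ) [NeZero N] (M : Matrix (Fin N) (Fin N) ℂ)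
    (i j : ℤ) : ℂ :=
  M (finOfInt N i) (finOfInt N j)


/-!
Reading indices in the ring `Fin N = ℤ/N`, the cyclic order is `⟨a ≤ b ≤ c⟩ ↔ b - a ≤ c - a`
(representatives in `[0, N)`). Hence, for a window `i ≤ k < i + N`, reduction mod `N` maps the
integer interval `[i, k]` bijectively onto `{j | ⟨ī ≤ j ≤ k̄⟩}`, with inverse `j ↦ i + (j - ī)`,
which turns the sum defining `P • Q` into the sum over `[i, k]`.
-/

open Fin.CommRing

theorem finOfInt_eq_intCast (N : ℕ) [NeZero N] (x : ℤ) : finOfInt N x = x :=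
  Fin.ext (Fin.val_intCast x).symm

theorem finOfInt_natCast_val {N : ℕ} [NeZero N] (a : Fin N) : finOfInt N (a : ℕ) = a := by
  rw [finOfInt_eq_intCast, Int.cast_natCast, Fin.cast_val_eq_self]

theorem finOfInt_add_self (N : ℕ) [NeZero N] (x : ℤ) : finOfInt N (x + N) = finOfInt N x := by
  rw [finOfInt_eq_intCast, finOfInt_eq_intCast, Int.cast_add, Int.cast_natCast, Fin.natCast_self,
    add_zero]

theorem cyc3_iff_sub_le {N : ℕ} (a b c : Fin N) : cyc3 a b c ↔ b - a ≤ c - a := by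
  unfold cyc3
  rw [Fin.le_def]
  split_ifs <;> fin_omega

theorem Fin.val_intCast_of_nonneg_of_lt {N : ℕ} [NeZero N] {t : ℤ} (h0 : 0 ≤ t) (h1 : t < N) :
    (((t : Fin N) : ℕ) : ℤ) = t := by
  rw [Fin.val_intCast, Int.emod_eq_of_lt h0 h1, Int.toNat_of_nonneg h0]

theorem Fin.val_intCast_sub_intCast {N : ℕ} [NeZero N] {i j : ℤ} (h0 : 0 ≤ j - i)
    (h1 : j - i < N) : ((((j : Fin N) - (i : Fin N) : Fin N) : ℕ) : ℤ) = j - i := by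
  rw [← Int.cast_sub]
  exact Fin.val_intCast_of_nonneg_of_lt h0 h1

theorem sum_filter_cyc3_intCast_eq_sum_Icc {β : Type*} [AddCommMonoid β] {N : ℕ} [NeZero N]
    (f : Fin N → β) {i k : ℤ} (h0 : 0 ≤ k - i) (h1 : k - i < N) :
    ∑ j ∈ univ.filter (fun j => cyc3 (i : Fin N) j (k : Fin N)), f j =
      ∑ j ∈ Icc i k, f j := by
  have hk := Fin.val_intCast_sub_intCast (N := N) h0 h1
  symm
  refine Finset.sum_nbij' (fun j => (j : Fin N)) (fun j => i + ((j - (i : Fin N) : Fin N) : ℕ))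
    ?_ ?_ ?_ ?_ (fun _ _ => rfl)
  · intro j hj
    rw [mem_Icc] at hj
    have hj' := Fin.val_intCast_sub_intCast (N := N) (i := i) (j := j) (by omega) (by omega)
    rw [mem_filter, cyc3_iff_sub_le, Fin.le_def]
    exact ⟨mem_univ _, by omega⟩
  · intro j hj
    rw [mem_filter, cyc3_iff_sub_le, Fin.le_def] at hj
    rw [mem_Icc]
    omega
  · intro j hj
    rw [mem_Icc] at hj
    rw [Fin.val_intCast_sub_intCast (by omega) (by omega)]
    ring
  · intro j _
    rw [Int.cast_add, Int.cast_natCast, Fin.cast_val_eq_self, add_sub_cancel]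

theorem stripPhi_cprod (N : ℕ) [NeZero N] (P Q : Matrix (Fin N) (Fin N) ℂ) {i k : ℤ}
    (h0 : 0 ≤ k - i) (h1 : k - i < N) :
    stripPhi N (cprod P Q) i k = ∑ j ∈ Icc i k, stripPhi N P i j * stripPhi N Q j k := by
  simp only [stripPhi, cprod, of_apply, finOfInt_eq_intCast]
  exact sum_filter_cyc3_intCast_eq_sum_Icc (fun j => P i j * Q j k) h0 h1

theorem stripPhi_injective (N : ℕ) [NeZero N] : Function.Injective (stripPhi N) := by
  intro M M' h
  ext a b
  simpa only [stripPhi, finOfInt_natCast_val] using congrFun (congrFun h (a : ℕ)) (b : ℕ)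

theorem stripPhi_add_self (N : ℕ) [NeZero N] (M : Matrix (Fin N) (Fin N) ℂ) (i j : ℤ) :
    stripPhi N M (i + N) (j + N) = stripPhi N M i j := by
  simp only [stripPhi, finOfInt_add_self]

/-- The periodic strip model: for all integers `i ≤ k` with `k − i < N`,
`Φ(P • Q)_{ik} = ∑_{j=i}^{k} Φ(P)_{ij} Φ(Q)_{jk}`; moreover `Φ` is injective and
`N`-periodic along the diagonal.  This realizes `(M_N(ℂ), •)` as the periodic strips in
the quotient of the ring of `ℤ×ℤ` upper triangular matrices by the `N`-th power of the
shift. -/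
theorem brauer_cprod_strip_model (N : ℕ) [NeZero N] :
    (∀ P Q : Matrix (Fin N) (Fin N) ℂ, ∀ i k : ℤ, 0 ≤ k - i → k - i < N →
      stripPhi N (cprod P Q) i k =
        ∑ j ∈ Finset.Icc i k, stripPhi N P i j * stripPhi N Q j k) ∧
    Function.Injective (stripPhi N) ∧
    (∀ M : Matrix (Fin N) (Fin N) ℂ, ∀ i j : ℤ, 0 ≤ j - i → j - i < N →
      stripPhi N M (i + N) (j + N) = stripPhi N M i j) := by
  exact ⟨fun P Q _ _ => stripPhi_cprod N P Q, stripPhi_injective N,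
    fun M i j _ _ => stripPhi_add_self N M i j⟩
end

section
/- For s ∈ ℂ define (s·M)_{ij} = s^{(j−i) mod N} M_{ij}, with the exponent (j−i) mod N taken in {0,1,…,N−1}, and for s ≠ 0 define M ×_s Q := s^{−1}·((s·M)(s·Q)), where the inner product is the ordinary matrix product. Then for all M, Q ∈ M_N(ℂ), all s ≠ 0, and all indices i,k: (M ×_s Q)_{ik} = (M • Q)_{ik} + s^N Σ_{j : not ⟨i ≤ j ≤ k⟩} M_{ij} Q_{jk}. In particular, for each entry (i,k), (M ×_s Q)_{ik} tends to (M • Q)_{ik} as s → 0 through nonzero values: lim_{s→0} M ×_s Q = M • Q. -/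
/-! Writing `d(i, j) = (j − i) mod N` for the cyclic gap, the entry `(i, k)` of `s⁻¹·((s·M)(s·Q))`
collects the terms `s^(d(i,j) + d(j,k) − d(i,k)) M_{ij} Q_{jk}`, and the exponent is `0` when
`⟨i ≤ j ≤ k⟩` and a full turn `N` otherwise. Letting `s → 0` kills exactly the latter terms. -/

open Matrix BigOperators Finset

open Topology Filter

/-- The rescaling `(s·M)_{ij} = s^{(j−i) mod N} M_{ij}`, exponent taken in `{0,…,N−1}`. -/
noncomputable def sdot (N : ℕ) (s : ℂ) (M : Matrix (Fin N) (Fin N) ℂ) :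
    Matrix (Fin N) (Fin N) ℂ :=
  Matrix.of fun i j => s ^ ((N + j.val - i.val) % N) * M i j

def cyclicGap {N : ℕ} (i j : Fin N) : ℕ := (N + j.val - i.val) % N

lemma sdot_apply (N : ℕ) (s : ℂ) (M : Matrix (Fin N) (Fin N) ℂ) (i j : Fin N) :
    sdot N s M i j = s ^ cyclicGap i j * M i j := rfl

lemma cyclicGap_eq {N : ℕ} (i j : Fin N) :
    cyclicGap i j = if i ≤ j then j.val - i.val else N + j.val - i.val := by
  have := i.isLt
  unfold cyclicGap
  split_ifs with h
  · rw [show N + j.val - i.val = N + (j.val - i.val) by omega, Nat.add_mod_left,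
      Nat.mod_eq_of_lt (by omega)]
  · exact Nat.mod_eq_of_lt (by omega)

lemma cyclicGap_add_cyclicGap {N : ℕ} (i j k : Fin N) :
    cyclicGap i j + cyclicGap j k = cyclicGap i k + if cyc3 i j k then 0 else N := by
  have := i.isLt; have := j.isLt; have := k.isLt
  simp only [cyclicGap_eq, cyc3, Fin.ext_iff, Fin.le_def]
  split_ifs <;> omega

lemma inv_pow_cyclicGap_mul {K : Type*} [Field K] {N : ℕ} {s : K} (hs : s ≠ 0) (i j k : Fin N)
    (a b : K) :
    s⁻¹ ^ cyclicGap i k * (s ^ cyclicGap i j * a * (s ^ cyclicGap j k * b)) =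
      if cyc3 i j k then a * b else s ^ N * (a * b) := by
  have hgap : s ^ cyclicGap i j * a * (s ^ cyclicGap j k * b) =
      s ^ cyclicGap i k * ((if cyc3 i j k then 1 else s ^ N) * (a * b)) := by
    rw [mul_mul_mul_comm, ← pow_add, cyclicGap_add_cyclicGap, pow_add]
    split_ifs <;> ring
  rw [hgap, inv_pow, inv_mul_cancel_left₀ (pow_ne_zero _ hs)]
  split_ifs <;> ring

theorem sdot_inv_sdot_mul_sdot_apply {N : ℕ} {s : ℂ} (hs : s ≠ 0)
    (M Q : Matrix (Fin N) (Fin N) ℂ) (i k : Fin N) :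
    sdot N s⁻¹ (sdot N s M * sdot N s Q) i k =
      cprod M Q i k + s ^ N * ∑ j ∈ univ.filter (fun j => ¬ cyc3 i j k), M i j * Q j k := by
  simp only [sdot_apply, cprod, of_apply, mul_apply, mul_sum, sum_filter,
    ← sum_add_distrib]
  refine sum_congr rfl fun j _ => ?_
  rw [inv_pow_cyclicGap_mul hs]
  split_ifs <;> simp

lemma tendsto_add_pow_mul_nhdsNE_zero {R : Type*} [Semiring R] [TopologicalSpace R]
    [IsTopologicalSemiring R] {N : ℕ} (hN : 0 < N) (a c : R) :
    Tendsto (fun s : R => a + s ^ N * c) (𝓝[≠] 0) (𝓝 a) := by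
  have hcont : Continuous fun s : R => a + s ^ N * c := by fun_prop
  simpa [zero_pow hN.ne'] using (hcont.tendsto 0).mono_left nhdsWithin_le_nhds

/-- For `s ≠ 0`, the conjugated product `M ×_s Q = s⁻¹·((s·M)(s·Q))` satisfies
`(M ×_s Q)_{ik} = (M • Q)_{ik} + s^N ∑_{j : ¬⟨i ≤ j ≤ k⟩} M_{ij} Q_{jk}`;
in particular each entry of `M ×_s Q` tends to the corresponding entry of `M • Q`
as `s → 0` through nonzero values. -/
theorem brauer_cprod_degeneration (N : ℕ) (hN : 0 < N)
    (M Q : Matrix (Fin N) (Fin N) ℂ) :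
    (∀ s : ℂ, s ≠ 0 → ∀ i k : Fin N,
      sdot N s⁻¹ (sdot N s M * sdot N s Q) i k =
        cprod M Q i k +
          s ^ N * ∑ j ∈ Finset.univ.filter (fun j => ¬ cyc3 i j k), M i j * Q j k) ∧
    (∀ i k : Fin N,
      Tendsto (fun s : ℂ => sdot N s⁻¹ (sdot N s M * sdot N s Q) i k)
        (𝓝[≠] (0 : ℂ)) (𝓝 (cprod M Q i k))) := by
  refine ⟨fun s hs i k => sdot_inv_sdot_mul_sdot_apply hs M Q i k, fun i k => ?_⟩
  refine (tendsto_add_pow_mul_nhdsNE_zero hN (cprod M Q i k)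
    (∑ j ∈ univ.filter (fun j => ¬ cyc3 i j k), M i j * Q j k)).congr' ?_
  filter_upwards [self_mem_nhdsWithin] with s hs
  exact (sdot_inv_sdot_mul_sdot_apply hs M Q i k).symm
end

section
/- For any ω = (ω_1,…,ω_N) ∈ ℂ^N, define the rescaled matrix ω·M by (ω·M)_{ik} = (Π_{j : ⟨i ≤ j ≤ k⟩, j ≠ k} ω_j) M_{ik} (an empty product is 1, so diagonal entries are unchanged). Then for all P, Q ∈ M_N(ℂ): ω·(P • Q) = (ω·P) • (ω·Q). (This is the extra torus action on (M_N(ℂ), •) beyond diagonal conjugation and rescaling.) -/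
open Matrix BigOperators Finset

/-- The torus rescaling: `(ω·M)_{ik} = (∏_{j : ⟨i ≤ j ≤ k⟩, j ≠ k} ω_j) M_{ik}`
(an empty product is `1`, so diagonal entries are unchanged). -/
noncomputable def wdot {N : ℕ} (ω : Fin N → ℂ) (M : Matrix (Fin N) (Fin N) ℂ) :
    Matrix (Fin N) (Fin N) ℂ :=
  Matrix.of fun i k =>
    (∏ j ∈ Finset.univ.filter (fun j => cyc3 i j k ∧ j ≠ k), ω j) * M i k

/-!
The weight of the entry `(i, k)` in `wdot ω` is the product of `ω` over the half-open cyclic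
interval `[i, k)`. Whenever `⟨i ≤ j ≤ k⟩`, this interval is the disjoint union of `[i, j)` and
`[j, k)`, so the weight of `(i, k)` is the product of the weights of `(i, j)` and `(j, k)`, which
is exactly what is needed term by term in `(P • Q)_{ik}`.
-/

namespace Fin

variable {N : ℕ}

/-- The half-open cyclic interval `[i, k)`; it is empty when `i = k`. -/
def cycIco (i k : Fin N) : Finset (Fin N) :=
  univ.filter fun j => cyc3 i j k ∧ j ≠ k

theorem mem_cycIco {i k l : Fin N} : l ∈ cycIco i k ↔ cyc3 i l k ∧ l ≠ k := by
  simp [cycIco]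

theorem cycIco_union_cycIco {i j k : Fin N} (h : cyc3 i j k) :
    cycIco i j ∪ cycIco j k = cycIco i k := by
  ext l
  simp only [mem_union, mem_cycIco]
  simp only [cyc3, Fin.ext_iff, Fin.le_def, ne_eq] at *
  split_ifs at * <;> omega

theorem disjoint_cycIco_cycIco {i j k : Fin N} (h : cyc3 i j k) :
    Disjoint (cycIco i j) (cycIco j k) := by
  rw [disjoint_left]
  intro l
  simp only [mem_cycIco]
  simp only [cyc3, Fin.ext_iff, Fin.le_def, ne_eq] at *
  split_ifs at * <;> omega

theorem prod_cycIco_mul_prod_cycIco {M : Type*} [CommMonoid M] (ω : Fin N → M) {i j k : Fin N}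
    (h : cyc3 i j k) :
    (∏ l ∈ cycIco i j, ω l) * ∏ l ∈ cycIco j k, ω l = ∏ l ∈ cycIco i k, ω l := by
  rw [← prod_union (disjoint_cycIco_cycIco h), cycIco_union_cycIco h]

end Fin

open Fin

theorem wdot_apply {N : ℕ} (ω : Fin N → ℂ) (M : Matrix (Fin N) (Fin N) ℂ) (i k : Fin N) :
    wdot ω M i k = (∏ j ∈ cycIco i k, ω j) * M i k :=
  rfl

theorem brauer_extra_torus_action_general (N : ℕ) (ω : Fin N → ℂ)
    (P Q : Matrix (Fin N) (Fin N) ℂ) :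
    wdot ω (cprod P Q) = cprod (wdot ω P) (wdot ω Q) := by
  ext i k
  simp only [wdot_apply, cprod, of_apply, mul_sum]
  refine sum_congr rfl fun j hj => ?_
  rw [← prod_cycIco_mul_prod_cycIco ω (mem_filter.mp hj).2]
  ring

/-- The extra torus action on `(M_N(ℂ), •)`: for every `ω ∈ ℂ^N`,
`ω·(P • Q) = (ω·P) • (ω·Q)`. -/
theorem brauer_extra_torus_action (N : ℕ) (hN : 0 < N) (ω : Fin N → ℂ)
    (P Q : Matrix (Fin N) (Fin N) ℂ) :
    wdot ω (cprod P Q) = cprod (wdot ω P) (wdot ω Q) :=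
  brauer_extra_torus_action_general N ω P Q
end

section
/- Let N ≥ 2, let M ∈ M_N(ℂ) have zero diagonal (M_{jj} = 0 for all j), let λ ∈ ℂ, and let i ∈ {1,…,N} (indices mod N, so i+1 means 1 when i = N). Then (M + λ e^{i+1,i}) • (M + λ e^{i+1,i}) = M • M. In particular M ∈ M_N(ℂ) with zero diagonal satisfies M • M = 0 if and only if M + λ e^{i+1,i} does. -/
open Matrix BigOperators Finset

/-! In `P • P` the entry `P_{i+1,i}` only meets summands `P_{i+1,i} P_{i,k}` with
`⟨i+1 ≤ i ≤ k⟩` and `P_{a,i+1} P_{i+1,i}` with `⟨a ≤ i+1 ≤ i⟩`. Cyclic order forces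
`k = i` resp. `a = i+1`, so the other factor is a diagonal entry, which vanishes. -/

section

variable {N : ℕ} [NeZero N]

theorem Fin.val_add_one_of_two_le (hN : 2 ≤ N) (i : Fin N) :
    ((i + 1 : Fin N) : ℕ) = if (i : ℕ) + 1 = N then 0 else (i : ℕ) + 1 := by
  rw [Fin.val_add, Fin.val_one', Nat.mod_eq_of_lt hN]
  split_ifs with h
  · rw [h, Nat.mod_self]
  · exact Nat.mod_eq_of_lt (by omega)

theorem Fin.add_one_ne_self (hN : 2 ≤ N) (i : Fin N) : i + 1 ≠ i := by
  rw [ne_eq, Fin.ext_iff, Fin.val_add_one_of_two_le hN]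
  split_ifs <;> omega

theorem cyc3_add_one_self_left {i k : Fin N} (hN : 2 ≤ N) (h : cyc3 (i + 1) i k) :
    k = i := by
  have := i.isLt; have := k.isLt
  unfold cyc3 at h
  simp only [Fin.ext_iff, Fin.le_def, Fin.val_add_one_of_two_le hN] at h ⊢
  split_ifs at h <;> omega

theorem cyc3_add_one_self_right {i a : Fin N} (hN : 2 ≤ N) (h : cyc3 a (i + 1) i) :
    a = i + 1 := by
  have := i.isLt; have := a.isLt
  unfold cyc3 at h
  simp only [Fin.ext_iff, Fin.le_def, Fin.val_add_one_of_two_le hN] at h ⊢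
  split_ifs at h ⊢ <;> omega

theorem mul_eq_zero_of_cyc3_of_eq_add_one {P Q : Matrix (Fin N) (Fin N) ℂ}
    (hP : ∀ j, P j j = 0) (hQ : ∀ j, Q j j = 0) (hN : 2 ≤ N) {i a j k : Fin N}
    (h : cyc3 a j k) (hij : (a = i + 1 ∧ j = i) ∨ (j = i + 1 ∧ k = i)) :
    P a j * Q j k = 0 := by
  rcases hij with ⟨rfl, rfl⟩ | ⟨rfl, rfl⟩
  · rw [cyc3_add_one_self_left hN h, hQ, mul_zero]
  · rw [cyc3_add_one_self_right hN h, hP, zero_mul]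

theorem cprod_self_eq_of_eq_off {P Q : Matrix (Fin N) (Fin N) ℂ}
    (hP : ∀ j, P j j = 0) (hQ : ∀ j, Q j j = 0) (hN : 2 ≤ N) (i : Fin N)
    (hPQ : ∀ a b, ¬(a = i + 1 ∧ b = i) → P a b = Q a b) :
    cprod P P = cprod Q Q := by
  ext a k
  simp only [cprod, of_apply]
  refine Finset.sum_congr rfl fun j hj => ?_
  have hcyc : cyc3 a j k := (Finset.mem_filter.mp hj).2
  by_cases hij : (a = i + 1 ∧ j = i) ∨ (j = i + 1 ∧ k = i)
  · rw [mul_eq_zero_of_cyc3_of_eq_add_one hP hP hN hcyc hij,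
      mul_eq_zero_of_cyc3_of_eq_add_one hQ hQ hN hcyc hij]
  · rw [not_or] at hij
    rw [hPQ a j hij.1, hPQ j k hij.2]

end

/-- Adding any multiple of the matrix unit `e^{i+1,i}` (indices mod `N`) to a
zero-diagonal matrix `M` does not change `M • M`; in particular `M • M = 0` if and
only if `(M + λ e^{i+1,i}) • (M + λ e^{i+1,i}) = 0`. -/
theorem brauer_free_entry (N : ℕ) [NeZero N] (hN : 2 ≤ N)
    (M : Matrix (Fin N) (Fin N) ℂ)
    (hdiag : ∀ j, M j j = 0) (lam : ℂ) (i : Fin N) :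
    cprod (M + lam • Matrix.single (i + 1) i (1 : ℂ))
        (M + lam • Matrix.single (i + 1) i (1 : ℂ)) = cprod M M ∧
    (cprod M M = 0 ↔
      cprod (M + lam • Matrix.single (i + 1) i (1 : ℂ))
        (M + lam • Matrix.single (i + 1) i (1 : ℂ)) = 0) := by
  have hdiag' : ∀ j, (M + lam • Matrix.single (i + 1) i (1 : ℂ)) j j = 0 := fun j => by
    rw [Matrix.add_apply, Matrix.smul_apply, single_apply_of_ne, hdiag, smul_zero, add_zero]
    rintro ⟨rfl, h⟩
    exact Fin.add_one_ne_self hN _ h.symm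
  have hoff : ∀ a b, ¬(a = i + 1 ∧ b = i) →
      (M + lam • Matrix.single (i + 1) i (1 : ℂ)) a b = M a b := fun a b hab => by
    rw [Matrix.add_apply, Matrix.smul_apply, single_apply_of_ne, smul_zero, add_zero]
    exact fun h => hab ⟨h.1.symm, h.2.symm⟩
  have hsq := cprod_self_eq_of_eq_off hdiag' hdiag hN i hoff
  exact ⟨hsq, by rw [hsq]⟩
end

section
/- Let N ≥ 2, let i ∈ {1,…,N} (indices mod N), and let M ∈ M_N(ℂ) have zero diagonal and M_{i+1,i} = 0. Then the •-commutator of e^{i,i+1} with M equals the ordinary commutator: e^{i,i+1} • M − M • e^{i,i+1} = e^{i,i+1} M − M e^{i,i+1}, where juxtaposition denotes the ordinary matrix product. -/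
open Matrix BigOperators Finset

/-!
For `N ≥ 2` the cyclic successor `i + 1` lies cyclically between `i` and every `k ≠ i`, and `i`
lies cyclically between every `a ≠ i + 1` and `i + 1`. Hence multiplying by `e^{i,i+1}` with `•`
instead of the ordinary product loses exactly one entry on each side: the diagonal entry `(i,i)`
of `e^{i,i+1} M` and the diagonal entry `(i+1,i+1)` of `M e^{i,i+1}`, both equal to `M_{i+1,i}`.
So both corrections vanish when `M_{i+1,i} = 0`.
-/

namespace Fin

theorem val_add_one_eq_ite {N : ℕ} [NeZero N] (hN : 2 ≤ N) (i : Fin N) :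
    (i + 1 : Fin N).val = if i.val + 1 = N then 0 else i.val + 1 := by
  rw [Fin.val_add, Fin.val_one', Nat.mod_eq_of_lt hN]
  split_ifs with h
  · rw [h, Nat.mod_self]
  · exact Nat.mod_eq_of_lt (by omega)

end Fin

section CyclicOrder

variable {N : ℕ} [NeZero N] (hN : 2 ≤ N) {i : Fin N}
include hN

theorem cyc3_add_one_middle_iff {k : Fin N} : cyc3 i (i + 1) k ↔ k ≠ i := by
  have hval := Fin.val_add_one_eq_ite hN i
  simp only [cyc3, Fin.le_def, Fin.ext_iff, ne_eq]
  split_ifs at hval ⊢ <;> omega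

theorem cyc3_add_one_right_iff {a : Fin N} : cyc3 a i (i + 1) ↔ a ≠ i + 1 := by
  have hval := Fin.val_add_one_eq_ite hN i
  simp only [cyc3, Fin.le_def, Fin.ext_iff, ne_eq]
  split_ifs at hval ⊢ <;> omega

end CyclicOrder

section SingleProduct

variable {N : ℕ} (i j : Fin N) (c : ℂ) (M : Matrix (Fin N) (Fin N) ℂ)

theorem single_cprod_apply (a k : Fin N) :
    cprod (single i j c) M a k = if a = i ∧ cyc3 i j k then c * M j k else 0 := by
  rw [cprod, of_apply, sum_filter, sum_eq_single j (fun b _ hb => by simp [hb.symm]) (by simp)]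
  by_cases ha : a = i
  · simp [ha]
  · simp [ha, Ne.symm ha]

theorem cprod_single_apply (a k : Fin N) :
    cprod M (single i j c) a k = if k = j ∧ cyc3 a i j then M a i * c else 0 := by
  rw [cprod, of_apply, sum_filter, sum_eq_single i (fun b _ hb => by simp [hb.symm]) (by simp)]
  by_cases hk : k = j
  · simp [hk]
  · simp [hk, Ne.symm hk]

end SingleProduct

section SuccessorUnit

variable {N : ℕ} [NeZero N] (hN : 2 ≤ N) (i : Fin N) (c : ℂ) (M : Matrix (Fin N) (Fin N) ℂ)
include hN

theorem single_add_one_cprod :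
    cprod (single i (i + 1) c) M = single i (i + 1) c * M - single i i (c * M (i + 1) i) := by
  ext a k
  simp only [single_cprod_apply, cyc3_add_one_middle_iff hN, Matrix.sub_apply]
  by_cases ha : a = i
  · obtain rfl := ha
    by_cases hk : k = a
    · simp [hk]
    · simp [hk, Ne.symm hk]
  · simp [ha, Ne.symm ha]

theorem cprod_single_add_one :
    cprod M (single i (i + 1) c) =
      M * single i (i + 1) c - single (i + 1) (i + 1) (M (i + 1) i * c) := by
  ext a k
  simp only [cprod_single_apply, cyc3_add_one_right_iff hN, Matrix.sub_apply]
  by_cases hk : k = i + 1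
  · obtain rfl := hk
    by_cases ha : a = i + 1
    · simp [ha]
    · simp [ha, Ne.symm ha]
  · simp [hk, Ne.symm hk]

end SuccessorUnit

theorem brauer_commutators_agree_general (N : ℕ) [NeZero N] (hN : 2 ≤ N) (i : Fin N)
    (M : Matrix (Fin N) (Fin N) ℂ)
    (h0 : M (i + 1) i = 0) :
    cprod (Matrix.single i (i + 1) (1 : ℂ)) M -
        cprod M (Matrix.single i (i + 1) (1 : ℂ)) =
      Matrix.single i (i + 1) (1 : ℂ) * M -
        M * Matrix.single i (i + 1) (1 : ℂ) := by
  rw [single_add_one_cprod hN, cprod_single_add_one hN, h0]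
  simp

/-- If `M` has zero diagonal and `M_{i+1,i} = 0` (indices mod `N`), then the
`•`-commutator of the matrix unit `e^{i,i+1}` with `M` equals the ordinary
commutator. -/
theorem brauer_commutators_agree (N : ℕ) [NeZero N] (hN : 2 ≤ N) (i : Fin N)
    (M : Matrix (Fin N) (Fin N) ℂ)
    (hdiag : ∀ j, M j j = 0) (h0 : M (i + 1) i = 0) :
    cprod (Matrix.single i (i + 1) (1 : ℂ)) M -
        cprod M (Matrix.single i (i + 1) (1 : ℂ)) =
      Matrix.single i (i + 1) (1 : ℂ) * M -
        M * Matrix.single i (i + 1) (1 : ℂ) :=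
  brauer_commutators_agree_general N hN i M h0
end

section
/- Let M ∈ M_N(ℂ) have zero diagonal and satisfy M • M = 0, and let P ∈ M_N(ℂ) be •-invertible with •-inverse P^{•−1}. Set M' = P • M • P^{•−1}. Then for every i = 1,…,N, (M'²)_{ii} = (M²)_{ii}, where M² and M'² denote the ordinary matrix squares. That is, the diagonal of the ordinary square is invariant under •-conjugation on the Brauer loop scheme. -/
open Matrix BigOperators Finset

/-! Write `A = a + b` with `a` the upper triangular part of `A` (diagonal included) and `b` its
strictly lower part. Then `A • B` has upper part `a a'` and strictly lower part that of
`a b' + b a'`: the product `•` is the trivial extension of the upper triangular algebra by the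
bimodule of matrices modulo upper triangular ones.

If `A` has zero diagonal, then `(A²)ᵢᵢ = (a b + b a)ᵢᵢ`, and this only depends on `b` modulo upper
triangular matrices. Let `u, u'` be the upper parts of `P, P^{•-1}` (so `u' u = 1`) and `p` the
strictly lower part of `P`. Then `M' = P • M • P^{•-1}` has upper part `u a u'`, and its strictly
lower part agrees with `u (b + ⁅u' p, a⁆) u'` modulo upper triangular matrices. As `a² = 0`, the anticommutator of `a` with
`b + ⁅u' p, a⁆` is `a b + b a`, which is upper triangular since `M • M = 0`; so `(M'²)ᵢᵢ` is the
diagonal entry of `u (a b + b a) u'`, i.e. `(a b + b a)ᵢᵢ`. -/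

namespace Matrix

variable {n R : Type*} [LinearOrder n]

section Zero

variable [Zero R]

def upperPart (A : Matrix n n R) : Matrix n n R :=
  of fun i j => if i ≤ j then A i j else 0

def strictLowerPart (A : Matrix n n R) : Matrix n n R :=
  of fun i j => if i ≤ j then 0 else A i j

variable {A : Matrix n n R}

theorem isUpperTriangular_upperPart (A : Matrix n n R) : (upperPart A).IsUpperTriangular :=
  fun _ _ hji => if_neg (not_le.2 hji)

theorem upperPart_apply_self (A : Matrix n n R) (i : n) : upperPart A i i = A i i :=
  if_pos le_rfl

theorem IsUpperTriangular.upperPart_eq (hA : A.IsUpperTriangular) : upperPart A = A := by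
  ext i j
  by_cases h : i ≤ j
  · simp [upperPart, h]
  · simp [upperPart, h, hA (not_le.1 h)]

theorem strictLowerPart_eq_zero_iff : strictLowerPart A = 0 ↔ A.IsUpperTriangular := by
  constructor
  · intro h i j (hji : j < i)
    have hij := congrFun₂ h i j
    rwa [strictLowerPart, of_apply, if_neg (not_le.2 hji)] at hij
  · intro h
    ext i j
    by_cases hij : i ≤ j
    · simp [strictLowerPart, hij]
    · simp [strictLowerPart, hij, h (not_le.1 hij)]

@[simp]
theorem upperPart_strictLowerPart (A : Matrix n n R) : upperPart (strictLowerPart A) = 0 := by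
  ext i j
  by_cases h : i ≤ j <;> simp [upperPart, strictLowerPart, h]

@[simp]
theorem strictLowerPart_strictLowerPart (A : Matrix n n R) :
    strictLowerPart (strictLowerPart A) = strictLowerPart A := by
  ext i j
  by_cases h : i ≤ j <;> simp [strictLowerPart, h]

end Zero

section AddZeroClass

variable [AddZeroClass R] (A B : Matrix n n R)

theorem upperPart_add : upperPart (A + B) = upperPart A + upperPart B := by
  ext i j
  by_cases h : i ≤ j <;> simp [upperPart, h]

theorem strictLowerPart_add :
    strictLowerPart (A + B) = strictLowerPart A + strictLowerPart B := by
  ext i j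
  by_cases h : i ≤ j <;> simp [strictLowerPart, h]

theorem upperPart_add_strictLowerPart : upperPart A + strictLowerPart A = A := by
  ext i j
  by_cases h : i ≤ j <;> simp [upperPart, strictLowerPart, h]

end AddZeroClass

theorem sub_upperPart [AddCommGroup R] (A : Matrix n n R) :
    A - upperPart A = strictLowerPart A :=
  sub_eq_of_eq_add' (upperPart_add_strictLowerPart A).symm

variable [Fintype n]

section NonUnitalNonAssocSemiring

variable [NonUnitalNonAssocSemiring R] {S : Matrix n n R} {i : n}

theorem IsUpperTriangular.mul_apply_self {A B : Matrix n n R} (hA : A.IsUpperTriangular)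
    (hB : B.IsUpperTriangular) (i : n) : (A * B) i i = A i i * B i i := by
  rw [mul_apply]
  refine Finset.sum_eq_single i (fun j _ hj => ?_) (by simp)
  rcases lt_or_gt_of_ne hj with h | h
  · rw [hA h, zero_mul]
  · rw [hB h, mul_zero]

theorem strictLowerPart_mul_strictLowerPart_apply_self (A B : Matrix n n R) (i : n) :
    (strictLowerPart A * strictLowerPart B) i i = 0 := by
  rw [mul_apply]
  refine Finset.sum_eq_zero fun j _ => ?_
  rcases le_total i j with h | h <;> simp [strictLowerPart, h]

theorem IsUpperTriangular.mul_add_mul_apply_self_eq_zero (hS : S.IsUpperTriangular)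
    (hSi : S i i = 0) {X : Matrix n n R} (hX : X.IsUpperTriangular) :
    (S * X + X * S) i i = 0 := by
  rw [add_apply, hS.mul_apply_self hX, hX.mul_apply_self hS, hSi, zero_mul, mul_zero, add_zero]

theorem mul_self_apply_self_of_apply_self_eq_zero {A : Matrix n n R} (hA : A i i = 0) :
    (A * A) i i = (upperPart A * strictLowerPart A + strictLowerPart A * upperPart A) i i := by
  have hU := isUpperTriangular_upperPart A
  have hUi : upperPart A i i = 0 := (upperPart_apply_self A i).trans hA
  conv_lhs => rw [← upperPart_add_strictLowerPart A]
  simp only [add_mul, mul_add, add_apply]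
  rw [hU.mul_apply_self hU, hUi, zero_mul, strictLowerPart_mul_strictLowerPart_apply_self]
  abel

end NonUnitalNonAssocSemiring

theorem IsUpperTriangular.mul_add_mul_apply_self_congr [Ring R] {S : Matrix n n R} {i : n}
    (hS : S.IsUpperTriangular) (hSi : S i i = 0) {X Y : Matrix n n R}
    (hXY : (X - Y).IsUpperTriangular) : (S * X + X * S) i i = (S * Y + Y * S) i i := by
  have h : S * X + X * S - (S * Y + Y * S) = S * (X - Y) + (X - Y) * S := by noncomm_ring
  rw [← sub_eq_zero, ← sub_apply, h, hS.mul_add_mul_apply_self_eq_zero hSi hXY]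

theorem IsUpperTriangular.conj_apply_self_of_mul_eq_one [CommSemiring R] {u u' X : Matrix n n R}
    (hu : u.IsUpperTriangular) (hu' : u'.IsUpperTriangular) (hX : X.IsUpperTriangular)
    (h : u * u' = 1) (i : n) : (u * X * u') i i = X i i := by
  have h1 : u i i * u' i i = 1 := by rw [← hu.mul_apply_self hu', h, one_apply_eq]
  rw [IsUpperTriangular.mul_apply_self (hu.mul hX) hu', hu.mul_apply_self hX, mul_right_comm, h1,
    one_mul]

end Matrix

theorem conj_mul_conj_of_mul_eq_one {α : Type*} [Monoid α] {u u' : α} (h : u' * u = 1)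
    (X Y : α) : (u * X * u') * (u * Y * u') = u * (X * Y) * u' := by
  simp only [mul_assoc]
  rw [← mul_assoc u' u, h, one_mul]

theorem anticommutator_add_lie_of_mul_self_eq_zero {α : Type*} [Ring α] {a : α} (ha : a * a = 0)
    (b F : α) : a * (b + ⁅F, a⁆) + (b + ⁅F, a⁆) * a = a * b + b * a := by
  have h : a * (b + ⁅F, a⁆) + (b + ⁅F, a⁆) * a =
      a * b + b * a + (F * (a * a) - a * a * F) := by
    rw [Ring.lie_def]
    noncomm_ring
  rw [h, ha, mul_zero, zero_mul, sub_zero, add_zero]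

section Cprod

variable {N : ℕ}

theorem cyc3_iff (i j k : Fin N) :
    cyc3 i j k ↔ if i ≤ k then i ≤ j ∧ j ≤ k else i ≤ j ∨ j ≤ k := by
  simp only [cyc3, Fin.le_def, Fin.ext_iff]
  split_ifs <;> omega

theorem cprod_eq_upperPart_mul_upperPart_add (A B : Matrix (Fin N) (Fin N) ℂ) :
    cprod A B = upperPart A * upperPart B +
      strictLowerPart (upperPart A * strictLowerPart B + strictLowerPart A * upperPart B) := by
  ext i k
  simp only [cprod, of_apply, Matrix.add_apply, Matrix.mul_apply, upperPart, strictLowerPart,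
    sum_filter, cyc3_iff]
  by_cases hik : i ≤ k
  · simp only [hik, if_true, add_zero]
    refine sum_congr rfl fun j _ => ?_
    by_cases hij : i ≤ j <;> by_cases hjk : j ≤ k <;> simp [hij, hjk]
  · simp only [hik, if_false, ← sum_add_distrib]
    refine sum_congr rfl fun j _ => ?_
    by_cases hij : i ≤ j <;> by_cases hjk : j ≤ k
    · exact absurd (hij.trans hjk) hik
    all_goals simp [hij, hjk]

theorem upperPart_cprod (A B : Matrix (Fin N) (Fin N) ℂ) :
    upperPart (cprod A B) = upperPart A * upperPart B := by
  rw [cprod_eq_upperPart_mul_upperPart_add, upperPart_add, upperPart_strictLowerPart, add_zero,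
    IsUpperTriangular.upperPart_eq
      ((isUpperTriangular_upperPart A).mul (isUpperTriangular_upperPart B))]

theorem strictLowerPart_cprod (A B : Matrix (Fin N) (Fin N) ℂ) :
    strictLowerPart (cprod A B) =
      strictLowerPart (upperPart A * strictLowerPart B + strictLowerPart A * upperPart B) := by
  rw [cprod_eq_upperPart_mul_upperPart_add, strictLowerPart_add, strictLowerPart_strictLowerPart,
    strictLowerPart_eq_zero_iff.2
      ((isUpperTriangular_upperPart A).mul (isUpperTriangular_upperPart B)), zero_add]

theorem cprod_eq_iff_of_isUpperTriangular {A B C : Matrix (Fin N) (Fin N) ℂ}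
    (hC : C.IsUpperTriangular) :
    cprod A B = C ↔ upperPart A * upperPart B = C ∧
      (upperPart A * strictLowerPart B + strictLowerPart A * upperPart B).IsUpperTriangular := by
  constructor
  · rintro rfl
    exact ⟨(upperPart_cprod A B).symm.trans hC.upperPart_eq,
      strictLowerPart_eq_zero_iff.1
        ((strictLowerPart_cprod A B).symm.trans (strictLowerPart_eq_zero_iff.2 hC))⟩
  · rintro ⟨hU, hL⟩
    rw [cprod_eq_upperPart_mul_upperPart_add, hU, strictLowerPart_eq_zero_iff.2 hL, add_zero]

theorem isUpperTriangular_strictLowerPart_cprod_conj_sub {M P Pinv : Matrix (Fin N) (Fin N) ℂ}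
    (hP : cprod Pinv P = 1) :
    (strictLowerPart (cprod (cprod P M) Pinv) -
      upperPart P * (strictLowerPart M + ⁅upperPart Pinv * strictLowerPart P, upperPart M⁆) *
        upperPart Pinv).IsUpperTriangular := by
  obtain ⟨hu'u, hE⟩ := (cprod_eq_iff_of_isUpperTriangular blockTriangular_one).1 hP
  set u := upperPart P
  set u' := upperPart Pinv
  set a := upperPart M
  set p := strictLowerPart P
  set q := strictLowerPart Pinv
  set W := u * strictLowerPart M + p * a
  have hT : u * a * q + strictLowerPart W * u' - u * (strictLowerPart M + ⁅u' * p, a⁆) * u' =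
      u * a * (u' * p + q * u) * u' - upperPart W * u' +
        u * a * q * (1 - u * u') + (1 - u * u') * p * a * u' := by
    rw [← sub_upperPart W, Ring.lie_def]
    simp only [W]
    noncomm_ring
  simp only [mul_eq_one_comm.1 hu'u, sub_self, mul_zero, zero_mul, add_zero] at hT
  rw [strictLowerPart_cprod, upperPart_cprod, strictLowerPart_cprod, ← sub_upperPart,
    sub_right_comm, hT]
  have hu := isUpperTriangular_upperPart P
  have hu' := isUpperTriangular_upperPart Pinv
  exact ((((hu.mul (isUpperTriangular_upperPart M)).mul hE).mul hu').sub
    ((isUpperTriangular_upperPart W).mul hu')).sub (isUpperTriangular_upperPart _)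

end Cprod

theorem brauer_square_diag_invariant_general (N : ℕ)
    (M P Pinv : Matrix (Fin N) (Fin N) ℂ)
    (hdiag : ∀ i, M i i = 0) (hMM : cprod M M = 0)
    (hP' : cprod Pinv P = 1) :
    ∀ i : Fin N,
      (cprod (cprod P M) Pinv * cprod (cprod P M) Pinv) i i = (M * M) i i := by
  intro i
  obtain ⟨haa, hG⟩ := (cprod_eq_iff_of_isUpperTriangular blockTriangular_zero).1 hMM
  obtain ⟨hu'u, -⟩ := (cprod_eq_iff_of_isUpperTriangular blockTriangular_one).1 hP'
  have hu := isUpperTriangular_upperPart P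
  have hu' := isUpperTriangular_upperPart Pinv
  have ha := isUpperTriangular_upperPart M
  have hS : upperPart (cprod (cprod P M) Pinv) = upperPart P * upperPart M * upperPart Pinv := by
    rw [upperPart_cprod, upperPart_cprod]
  have hSi : upperPart (cprod (cprod P M) Pinv) i i = 0 := by
    rw [hS, IsUpperTriangular.mul_apply_self (hu.mul ha) hu', hu.mul_apply_self ha,
      upperPart_apply_self M, hdiag, mul_zero, zero_mul]
  rw [mul_self_apply_self_of_apply_self_eq_zero (hdiag i),
    mul_self_apply_self_of_apply_self_eq_zero ((upperPart_apply_self _ i).symm.trans hSi),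
    (isUpperTriangular_upperPart _).mul_add_mul_apply_self_congr hSi
      (isUpperTriangular_strictLowerPart_cprod_conj_sub hP'),
    hS, conj_mul_conj_of_mul_eq_one hu'u, conj_mul_conj_of_mul_eq_one hu'u, ← add_mul, ← mul_add,
    anticommutator_add_lie_of_mul_self_eq_zero haa]
  exact hu.conj_apply_self_of_mul_eq_one hu' hG (mul_eq_one_comm.1 hu'u) i

/-- On the Brauer loop scheme, the diagonal of the ordinary square is invariant under
`•`-conjugation: if `M` has zero diagonal, `M • M = 0`, and `P` is `•`-invertible with
`•`-inverse `Pinv`, then the `•`-conjugate `M' = P • M • Pinv` satisfies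
`(M'²)_{ii} = (M²)_{ii}` for every `i`, where squares are ordinary matrix squares. -/
theorem brauer_square_diag_invariant (N : ℕ) (hN : 0 < N)
    (M P Pinv : Matrix (Fin N) (Fin N) ℂ)
    (hdiag : ∀ i, M i i = 0) (hMM : cprod M M = 0)
    (hP : cprod P Pinv = 1) (hP' : cprod Pinv P = 1) :
    ∀ i : Fin N,
      (cprod (cprod P M) Pinv * cprod (cprod P M) Pinv) i i = (M * M) i i :=
  brauer_square_diag_invariant_general N M P Pinv hdiag hMM hP'
end

section
/- Write N = 2n + r with r ∈ {0,1}. For every link pattern π (involution of {1,…,N} with exactly r fixed points), there exists M ∈ M_N(ℂ) with zero diagonal and M • M = 0 such that for all i, j ∈ {1,…,N}: (M²)_{ii} = (M²)_{jj} if and only if j ∈ {i, π(i)}, where M² denotes the ordinary matrix square. (Every link pattern is realized on the Brauer loop scheme.) -/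
/-!
Send each arc `{i, π i}` of the link pattern to a pair of opposite entries
`M i (π i), M (π i) i` carrying the weight `min i (π i) + 1`. A nonzero product
`M i j * M j k` forces `k = i ≠ j`, and `⟨i ≤ j ≤ i⟩` only holds for `j = i`, so `M • M = 0`.
The diagonal of `M²` is the squared weight on arcs and `0` at the (at most one) fixed
point, so it takes the same value exactly on the orbits of `π`.
-/

open Matrix BigOperators Finset

open Function

section LinkMatrix

variable {ι R : Type*} [DecidableEq ι]

def linkMatrix [Zero R] (π : ι → ι) (w : ι → R) : Matrix ι ι R :=
  Matrix.of fun i j => if j = π i ∧ j ≠ i then w i else 0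

variable [Zero R] {π : ι → ι} {w : ι → R}

@[simp]
lemma linkMatrix_apply_self (i : ι) : linkMatrix π w i i = 0 := by
  simp [linkMatrix]

lemma linkMatrix_apply_of_not {i j : ι} (h : ¬(j = π i ∧ j ≠ i)) : linkMatrix π w i j = 0 :=
  if_neg h

lemma linkMatrix_apply_map (i : ι) (hi : π i ≠ i) : linkMatrix π w i (π i) = w i :=
  if_pos ⟨rfl, hi⟩

end LinkMatrix

lemma linkMatrix_mul_self_apply_self {ι R : Type*} [DecidableEq ι] [Fintype ι]
    [NonUnitalNonAssocSemiring R] {π : ι → ι} (hπ : Involutive π) (w : ι → R) (i : ι) :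
    (linkMatrix π w * linkMatrix π w) i i = if π i = i then 0 else w i * w (π i) := by
  rw [mul_apply]
  split_ifs with hi
  · exact sum_eq_zero fun j _ => by
      rw [linkMatrix_apply_of_not (by rw [hi]; exact fun h => h.2 h.1), zero_mul]
  · have hback := linkMatrix_apply_map (π := π) (w := w) (π i) (by rwa [hπ i, ne_comm])
    rw [hπ i] at hback
    rw [sum_eq_single (π i), linkMatrix_apply_map i hi, hback]
    · exact fun j _ hj => by rw [linkMatrix_apply_of_not (fun h => hj h.1), zero_mul]
    · exact fun h => absurd (mem_univ _) h

lemma cyc3_self_right_iff {N : ℕ} (i j : Fin N) : cyc3 i j i ↔ j = i := by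
  simp [cyc3]

lemma cprod_linkMatrix_self {N : ℕ} {π : Fin N → Fin N} (hπ : Involutive π) (w : Fin N → ℂ) :
    cprod (linkMatrix π w) (linkMatrix π w) = 0 := by
  ext i k
  simp only [cprod, of_apply, Matrix.zero_apply]
  refine sum_eq_zero fun j hj => ?_
  by_cases hij : j = π i ∧ j ≠ i
  · obtain ⟨rfl, hji⟩ := hij
    have hki : ¬(k = π (π i) ∧ k ≠ π i) := by
      rintro ⟨rfl, -⟩
      rw [hπ i] at hj
      exact hji ((cyc3_self_right_iff _ _).mp (mem_filter.mp hj).2)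
    rw [linkMatrix_apply_of_not hki, mul_zero]
  · rw [linkMatrix_apply_of_not hij, zero_mul]

lemma min_self_map_eq_iff {α : Type*} [LinearOrder α] {π : α → α} (hπ : Involutive π)
    {i j : α} : min i (π i) = min j (π j) ↔ j = i ∨ j = π i := by
  constructor
  · intro h
    rcases min_choice i (π i) with hi | hi <;> rcases min_choice j (π j) with hj | hj <;>
      rw [hi, hj] at h
    · exact .inl h.symm
    · exact .inr (by rw [h, hπ])
    · exact .inr h.symm
    · exact .inl (hπ.injective h).symm
  · rintro (rfl | rfl)
    · rfl
    · rw [hπ, min_comm]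

lemma ite_fixed_eq_ite_fixed_iff {ι R : Type*} [DecidableEq ι] [Zero R] {π : ι → ι} (hπ : Involutive π)
    (hfix : ∀ a b, π a = a → π b = b → a = b) {f : ι → R} (hf0 : ∀ i, f i ≠ 0)
    (hf : ∀ i j, π i ≠ i → π j ≠ j → (f i = f j ↔ j = i ∨ j = π i)) (i j : ι) :
    ((if π i = i then 0 else f i) = if π j = j then 0 else f j) ↔ j = i ∨ j = π i := by
  by_cases hi : π i = i <;> by_cases hj : π j = j <;> simp only [hi, hj, if_true, if_false]
  · simp [hfix j i hj hi]
  · refine ⟨fun h => absurd h.symm (hf0 j), ?_⟩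
    rintro (rfl | rfl) <;> simp_all
  · refine ⟨fun h => absurd h (hf0 i), ?_⟩
    rintro (rfl | rfl)
    · exact absurd hj hi
    · rw [hπ i] at hj
      exact absurd hj.symm hi
  · exact hf i j hi hj

theorem brauer_every_link_pattern_realized_general (N : ℕ)
    (π : Equiv.Perm (Fin N))
    (hinv : ∀ i, π (π i) = i)
    (hfix : (Finset.univ.filter (fun i => π i = i)).card = N % 2) :
    ∃ M : Matrix (Fin N) (Fin N) ℂ,
      (∀ i, M i i = 0) ∧ cprod M M = 0 ∧
      (∀ i j : Fin N, (M * M) i i = (M * M) j j ↔ (j = i ∨ j = π i)) := by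
  have hπ : Involutive π := hinv
  let w : Fin N → ℂ := fun i => ((min i (π i) : Fin N) : ℕ) + 1
  have hw : ∀ i, w (π i) = w i := fun i => by simp only [w, hinv, min_comm]
  have hfix_unique : ∀ a b, π a = a → π b = b → a = b := fun a b ha hb =>
    card_le_one.mp (show #(univ.filter fun i => π i = i) ≤ 1 by omega)
      a (by simp [ha]) b (by simp [hb])
  refine ⟨linkMatrix π w, linkMatrix_apply_self, cprod_linkMatrix_self hπ w, fun i j => ?_⟩
  rw [linkMatrix_mul_self_apply_self hπ, linkMatrix_mul_self_apply_self hπ, hw, hw]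
  refine ite_fixed_eq_ite_fixed_iff hπ hfix_unique (fun i => mul_self_ne_zero.mpr (Nat.cast_add_one_ne_zero _))
    (fun i j _ _ => ?_) i j
  rw [← min_self_map_eq_iff hπ, ← Fin.val_inj, ← Nat.add_right_cancel_iff (n := 1),
    ← Nat.mul_self_inj]
  simp only [w]
  exact_mod_cast Iff.rfl

/-- Every link pattern is realized on the Brauer loop scheme: writing `N = 2n + r`
with `r = N % 2 ∈ {0,1}`, for every involution `π` of the indices with exactly `r`
fixed points there exists `M` with zero diagonal and `M • M = 0` such that
`(M²)_{ii} = (M²)_{jj}` if and only if `j ∈ {i, π(i)}` (ordinary matrix square). -/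
theorem brauer_every_link_pattern_realized (N : ℕ) (hN : 0 < N)
    (π : Equiv.Perm (Fin N))
    (hinv : ∀ i, π (π i) = i)
    (hfix : (Finset.univ.filter (fun i => π i = i)).card = N % 2) :
    ∃ M : Matrix (Fin N) (Fin N) ℂ,
      (∀ i, M i i = 0) ∧ cprod M M = 0 ∧
      (∀ i j : Fin N, (M * M) i i = (M * M) j j ↔ (j = i ∨ j = π i)) :=
  brauer_every_link_pattern_realized_general N π hinv hfix
end

section
/- Write N = 2n + r with r ∈ {0,1}, and let π be a link pattern (involution of {1,…,N} with exactly r fixed points). Suppose i, l ∈ {1,…,N} are such that there is no j with both ⟨i ≤ j ≤ l⟩ and ⟨i ≤ π(j) ≤ l⟩ (i.e., π has no chord with both endpoints in the cyclic interval from i to l). Then for every •-invertible P with •-inverse P^{•−1} and every diagonal matrix t, the matrix M = P • (π̲ t) • P^{•−1} satisfies M_{jk} = 0 for all j, k with ⟨i ≤ j ≤ k ≤ l⟩; in particular M_{il} = 0. -/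
/-!
Expanding both `•`-products, `M_{jk}` is a sum of terms `P_{ja} (π̲ t)_{ab} P^{•-1}_{bk}` with
`⟨j ≤ a ≤ b⟩` and `⟨j ≤ b ≤ k⟩`. When `⟨i ≤ j ≤ k ≤ l⟩`, both `a` and `b` then lie in the cyclic
interval from `i` to `l`, so `b = π a` would be a chord inside it; hence every `(π̲ t)_{ab}`
occurring is zero.
-/

open Matrix BigOperators Finset

lemma cyc3_trans {N : ℕ} {j a b k : Fin N} (hab : cyc3 j a b) (hbk : cyc3 j b k) :
    cyc3 j a k := by
  simp only [cyc3, Fin.le_def, Fin.ext_iff] at *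
  split_ifs at * <;> omega

lemma cyc3_of_cyc4_of_cyc3 {N : ℕ} {i j x k l : Fin N} (hjk : cyc4 i j k l)
    (hx : cyc3 j x k) : cyc3 i x l := by
  simp only [cyc3, cyc4, Fin.le_def, Fin.ext_iff] at *
  split_ifs at * <;> omega

lemma cprod_cprod_apply_eq_zero {N : ℕ} (P D Q : Matrix (Fin N) (Fin N) ℂ) {j k : Fin N}
    (hD : ∀ a b, cyc3 j a b → cyc3 j b k → D a b = 0) : cprod (cprod P D) Q j k = 0 := by
  simp only [cprod, of_apply]
  refine Finset.sum_eq_zero fun b hb => ?_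
  rw [Finset.mem_filter] at hb
  rw [Finset.sum_eq_zero fun a ha => ?_, zero_mul]
  rw [hD a b (Finset.mem_filter.1 ha).2 hb.2, mul_zero]

theorem brauer_linear_conditions_general (N : ℕ)
    (π : Equiv.Perm (Fin N))
    (i l : Fin N)
    (hchord : ∀ j : Fin N, ¬ (cyc3 i j l ∧ cyc3 i (π j) l))
    (P Pinv : Matrix (Fin N) (Fin N) ℂ)
    (t : Fin N → ℂ)
    (M : Matrix (Fin N) (Fin N) ℂ)
    (hM : M = cprod
      (cprod P (Matrix.of fun a b => if b = π a ∧ b ≠ a then t b else 0)) Pinv) :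
    ∀ j k : Fin N, cyc4 i j k l → M j k = 0 := by
  intro j k hjk
  subst hM
  refine cprod_cprod_apply_eq_zero _ _ _ fun a b hab hbk => ?_
  rw [of_apply, if_neg]
  rintro ⟨rfl, -⟩
  exact hchord a ⟨cyc3_of_cyc4_of_cyc3 hjk (cyc3_trans hab hbk), cyc3_of_cyc4_of_cyc3 hjk hbk⟩

/-- Linear equations on the component `E_π`: write `N = 2n + r`, `r ∈ {0,1}`, and let
`π` be a link pattern (involution with exactly `r` fixed points).  Suppose `i, l` are
such that no `j` satisfies both `⟨i ≤ j ≤ l⟩` and `⟨i ≤ π(j) ≤ l⟩` (no chord of `π`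
inside the cyclic interval from `i` to `l`).  Then for every `•`-invertible `P` with
`•`-inverse `Pinv` and every diagonal matrix with entries `t`, the matrix
`M = P • (π̲ t) • Pinv` vanishes on the whole southwest triangle: `M_{jk} = 0` whenever
`⟨i ≤ j ≤ k ≤ l⟩`; in particular `M_{il} = 0`. -/
theorem brauer_linear_conditions (n r N : ℕ) (hr : r = 0 ∨ r = 1)
    (hN : N = 2 * n + r) (hpos : 0 < N)
    (π : Equiv.Perm (Fin N)) (hinv : ∀ i, π (π i) = i)
    (hfix : (Finset.univ.filter (fun i => π i = i)).card = r)
    (i l : Fin N)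
    (hchord : ∀ j : Fin N, ¬ (cyc3 i j l ∧ cyc3 i (π j) l))
    (P Pinv : Matrix (Fin N) (Fin N) ℂ)
    (hP : cprod P Pinv = 1) (hP' : cprod Pinv P = 1)
    (t : Fin N → ℂ)
    (M : Matrix (Fin N) (Fin N) ℂ)
    (hM : M = cprod
      (cprod P (Matrix.of fun a b => if b = π a ∧ b ≠ a then t b else 0)) Pinv) :
    ∀ j k : Fin N, cyc4 i j k l → M j k = 0 :=
  brauer_linear_conditions_general N π i l hchord P Pinv t M hM
end

section
/- Let N = 2n be even with n ≥ 1. If M ∈ M_N(ℂ) satisfies M_{il} = 0 for every pair (i,l) with (l − i) mod N < n (equivalently, for every l in the cyclic interval ⟨i ≤ l < i+n⟩, including l = i), then M • M = 0. Hence the linear subspace cut out by these equations lies inside the Brauer loop scheme E; it is the component E_{π_0} corresponding to the maximally crossing link pattern π_0(i) = i + n mod 2n. -/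
/-!
Measure the cyclic distance `d(a, b) = (b - a) mod N`. If `⟨i ≤ j ≤ k⟩` with `i ≠ k`, then
`d(i, j) + d(j, k) = d(i, k) < N ≤ 2n`, so one of `M i j`, `M j k` lies in the vanishing band
`d < n`; if `i = k` then `j = i` and `M i i` vanishes. Every term of `(M • M)_{ik}` is thus zero.
-/

open Matrix BigOperators Finset

namespace Brauer

variable {N : ℕ}

def cycDist (a b : Fin N) : ℕ := (N + b.val - a.val) % N

lemma cycDist_eq (a b : Fin N) :
    cycDist a b = if a ≤ b then b.val - a.val else N + b.val - a.val := by
  have ha := a.isLt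
  split_ifs with hab
  · rw [Fin.le_def] at hab
    have e : N + b.val - a.val = (b.val - a.val) + N := by omega
    rw [cycDist, e, Nat.add_mod_right, Nat.mod_eq_of_lt (by omega)]
  · exact Nat.mod_eq_of_lt (by omega)

lemma cycDist_self (a : Fin N) : cycDist a a = 0 := by
  simp [cycDist_eq]

lemma cycDist_lt (a b : Fin N) : cycDist a b < N :=
  Nat.mod_lt _ (Fin.pos a)

lemma cycDist_add_of_cyc3 {i j k : Fin N} (hik : i ≠ k) (hc : cyc3 i j k) :
    cycDist i j + cycDist j k = cycDist i k := by
  rw [cyc3, if_neg hik] at hc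
  have hik' : i.val ≠ k.val := Fin.val_ne_of_ne hik
  have := j.isLt
  simp only [cycDist_eq, Fin.le_def] at hc ⊢
  rcases hc with ⟨_, _⟩ | ⟨_, _⟩ | ⟨_, _⟩ <;> split_ifs <;> omega

theorem cprod_self_eq_zero_of_band {n : ℕ} (hN : N ≤ 2 * n) (M : Matrix (Fin N) (Fin N) ℂ)
    (h : ∀ i l : Fin N, cycDist i l < n → M i l = 0) :
    cprod M M = 0 := by
  ext i k
  rw [cprod, of_apply, Matrix.zero_apply]
  refine Finset.sum_eq_zero fun j hj => ?_
  have hc : cyc3 i j k := (Finset.mem_filter.mp hj).2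
  by_cases hik : i = k
  · have hji : j = i := by rwa [cyc3, if_pos hik] at hc
    have hn : 0 < n := by have := Fin.pos i; omega
    rw [hji, h i i (by rwa [cycDist_self]), zero_mul]
  · have hsum := cycDist_add_of_cyc3 hik hc
    have hlt := cycDist_lt i k
    rcases Nat.lt_or_ge (cycDist i j) n with hij | hij
    · rw [h i j hij, zero_mul]
    · rw [h j k (by omega), mul_zero]

end Brauer

theorem brauer_max_crossing_component_general (n N : ℕ) (hN : N = 2 * n)
    (M : Matrix (Fin N) (Fin N) ℂ)
    (h : ∀ i l : Fin N, (N + l.val - i.val) % N < n → M i l = 0) :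
    cprod M M = 0 :=
  Brauer.cprod_self_eq_zero_of_band hN.le M h

/-- Let `N = 2n` be even, `n ≥ 1`.  If `M_{il} = 0` whenever `(l − i) mod N < n`
(i.e. `l` lies in the cyclic interval `⟨i ≤ l < i + n⟩`, including `l = i`), then
`M • M = 0`.  Hence this linear subspace lies inside the Brauer loop scheme `E`; it is
the component `E_{π₀}` for the maximally crossing link pattern `π₀(i) = i + n`. -/
theorem brauer_max_crossing_component (n N : ℕ) (hn : 1 ≤ n) (hN : N = 2 * n)
    (M : Matrix (Fin N) (Fin N) ℂ)
    (h : ∀ i l : Fin N, (N + l.val - i.val) % N < n → M i l = 0) :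
    cprod M M = 0 :=
  brauer_max_crossing_component_general n N hN M h
end

section
/- Let N ≥ 2, let i ∈ {1,…,N} (indices mod N), let λ ∈ ℂ, and let M ∈ M_N(ℂ) satisfy: M has zero diagonal, M • M = 0, and M_{i,i+1} = 0. Set N' = M + λ(e^{i+1,i} M − M e^{i+1,i}) (ordinary products). Then for all j, m ∈ {1,…,N}: (N' • N')_{jm} = λ δ_{j,i+1} δ_{m,i} ((M²)_{ii} − (M²)_{i+1,i+1} − λ (M²)_{i,i+1}), where M² is the ordinary square and δ the Kronecker delta. In particular N' • N' vanishes away from the (i+1,i) entry, and N' • N' = 0 if and only if λ = 0 or λ (M²)_{i,i+1} = (M²)_{ii} − (M²)_{i+1,i+1}. -/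
open Matrix BigOperators Finset

/-!
Expand `(N' • N')_{jm}` using `N'_{ab} = M_{ab} + λ δ_{a,i+1} M_{ib} - λ δ_{b,i} M_{a,i+1}`.
Because `i` and `i + 1` are cyclically adjacent, for `m ≠ i` the interval `⟨i ≤ k ≤ m⟩` is
`⟨i+1 ≤ k ≤ m⟩` plus the point `i`, and dually at the right end; with the zero diagonal this turns
the terms linear in `λ` into entries of `M • M`, hence zero. The two point terms at `k = i` and
`k = i + 1` cancel, since these adjacent indices lie in `⟨j ≤ k ≤ m⟩` together or not at all
(unless `j = i + 1` or `m = i`, where the zero diagonal kills them). Only at `(j, m) = (i+1, i)`,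
where the interval is everything and `•` is the ordinary product, does something survive.
-/

lemma Matrix.single_eq_zero_iff {m n α : Type*} [DecidableEq m] [DecidableEq n] [Zero α]
    {p : m} {q : n} {c : α} : single p q c = 0 ↔ c = 0 :=
  ⟨fun h => by simpa using congrFun (congrFun h p) q, fun h => h ▸ single_zero p q⟩

def cycIcc {N : ℕ} (a b : Fin N) : Finset (Fin N) :=
  univ.filter fun k => cyc3 a k b

lemma mem_cycIcc {N : ℕ} {a b k : Fin N} : k ∈ cycIcc a b ↔ cyc3 a k b := by
  simp [cycIcc]

lemma cprod_apply_s18 {N : ℕ} (P Q : Matrix (Fin N) (Fin N) ℂ) (a b : Fin N) :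
    cprod P Q a b = ∑ k ∈ cycIcc a b, P a k * Q k b :=
  rfl

lemma cyc3_iff_val {N : ℕ} (a b c : Fin N) : cyc3 a b c ↔
    if (a : ℕ) = c then (b : ℕ) = a else
      ((a : ℕ) ≤ b ∧ (b : ℕ) ≤ c) ∨ ((b : ℕ) ≤ c ∧ (c : ℕ) ≤ a) ∨ ((c : ℕ) ≤ a ∧ (a : ℕ) ≤ b) := by
  simp only [cyc3, Fin.ext_iff, Fin.le_def]

lemma Fin.val_add_one_cases {N : ℕ} [NeZero N] (hN : 2 ≤ N) (i : Fin N) :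
    ((i + 1 : Fin N) : ℕ) = i + 1 ∧ (i : ℕ) + 1 < N ∨ ((i + 1 : Fin N) : ℕ) = 0 ∧ (i : ℕ) + 1 = N := by
  have hone : ((1 : Fin N) : ℕ) = 1 := by rw [Fin.val_one', Nat.mod_eq_of_lt hN]
  rw [Fin.val_add, hone]
  rcases Nat.lt_or_ge ((i : ℕ) + 1) N with h | h
  · exact Or.inl ⟨Nat.mod_eq_of_lt h, h⟩
  · have h : (i : ℕ) + 1 = N := by omega
    exact Or.inr ⟨by rw [h, Nat.mod_self], h⟩

section CyclicOrder

variable {N : ℕ} [NeZero N] {i : Fin N}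

lemma Fin.ne_add_one_self (hN : 2 ≤ N) : i ≠ i + 1 := by
  have := Fin.val_add_one_cases hN i
  rw [Ne, Fin.ext_iff]
  omega

lemma cycIcc_add_one_self_eq_univ (hN : 2 ≤ N) : cycIcc (i + 1) i = univ := by
  refine eq_univ_of_forall fun k => mem_cycIcc.2 ?_
  have := i.isLt
  have := Fin.val_add_one_cases hN i
  have := k.isLt
  rw [cyc3_iff_val]
  split_ifs <;> omega

lemma cycIcc_eq_insert_cycIcc_add_one {m : Fin N} (hN : 2 ≤ N) (hm : m ≠ i) :
    cycIcc i m = insert i (cycIcc (i + 1) m) := by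
  have := Fin.val_add_one_cases hN i
  have := i.isLt
  have := m.isLt
  rw [Ne, Fin.ext_iff] at hm
  ext k
  have := k.isLt
  rw [mem_insert, mem_cycIcc, mem_cycIcc, cyc3_iff_val, cyc3_iff_val, Fin.ext_iff]
  split_ifs <;> omega

lemma self_notMem_cycIcc_add_one {m : Fin N} (hN : 2 ≤ N) (hm : m ≠ i) :
    i ∉ cycIcc (i + 1) m := by
  have := Fin.val_add_one_cases hN i
  have := m.isLt
  have := i.isLt
  rw [Ne, Fin.ext_iff] at hm
  rw [mem_cycIcc, cyc3_iff_val]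
  split_ifs <;> omega

lemma cycIcc_add_one_eq_insert_cycIcc {j : Fin N} (hN : 2 ≤ N) (hj : j ≠ i + 1) :
    cycIcc j (i + 1) = insert (i + 1) (cycIcc j i) := by
  have := Fin.val_add_one_cases hN i
  have := i.isLt
  have := j.isLt
  rw [Ne, Fin.ext_iff] at hj
  ext k
  have := k.isLt
  rw [mem_insert, mem_cycIcc, mem_cycIcc, cyc3_iff_val, cyc3_iff_val, Fin.ext_iff]
  split_ifs <;> omega

lemma add_one_notMem_cycIcc_self {j : Fin N} (hN : 2 ≤ N) (hj : j ≠ i + 1) :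
    i + 1 ∉ cycIcc j i := by
  have := Fin.val_add_one_cases hN i
  have := j.isLt
  have := i.isLt
  rw [Ne, Fin.ext_iff] at hj
  rw [mem_cycIcc, cyc3_iff_val]
  split_ifs <;> omega

lemma add_one_mem_cycIcc_iff {j m : Fin N} (hN : 2 ≤ N) (hj : j ≠ i + 1) (hm : m ≠ i) :
    i + 1 ∈ cycIcc j m ↔ i ∈ cycIcc j m := by
  have := Fin.val_add_one_cases hN i
  have := j.isLt
  have := m.isLt
  have := i.isLt
  rw [Ne, Fin.ext_iff] at hj hm
  rw [mem_cycIcc, mem_cycIcc, cyc3_iff_val, cyc3_iff_val]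
  split_ifs <;> omega

end CyclicOrder

section Sweep

variable {N : ℕ} [NeZero N] (i : Fin N) (lam : ℂ) (M : Matrix (Fin N) (Fin N) ℂ)

noncomputable def sweep : Matrix (Fin N) (Fin N) ℂ :=
  M + lam • (single (i + 1) i (1 : ℂ) * M - M * single (i + 1) i (1 : ℂ))

lemma sweep_apply (a b : Fin N) :
    sweep i lam M a b = M a b + (if a = i + 1 then lam * M i b else 0)
      - (if b = i then lam * M a (i + 1) else 0) := by
  simp only [sweep, Matrix.add_apply, Matrix.smul_apply, Matrix.sub_apply, smul_eq_mul]
  rcases eq_or_ne a (i + 1) with rfl | ha <;> rcases eq_or_ne b i with rfl | hb <;>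
    simp [*] <;> ring

variable {i M}

lemma sweep_apply_mul_sweep_apply (hi : i ≠ i + 1) (h0 : M i (i + 1) = 0) (a k b : Fin N) :
    sweep i lam M a k * sweep i lam M k b = M a k * M k b
      + (if a = i + 1 then lam * (M i k * M k b) else 0)
      - (if b = i then lam * (M a k * M k (i + 1)) else 0)
      - (if a = i + 1 ∧ b = i then lam ^ 2 * (M i k * M k (i + 1)) else 0)
      + ((if k = i + 1 then lam * (M a (i + 1) * M i b) else 0)
        - (if k = i then lam * (M a (i + 1) * M i b) else 0)) := by
  rw [sweep_apply, sweep_apply]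
  by_cases ha : a = i + 1 <;> by_cases hb : b = i <;> by_cases hki : k = i <;>
    by_cases hki' : k = i + 1 <;> simp_all <;> ring

lemma cprod_sweep_sweep_apply (hi : i ≠ i + 1) (h0 : M i (i + 1) = 0) (a b : Fin N) :
    cprod (sweep i lam M) (sweep i lam M) a b = cprod M M a b
      + (if a = i + 1 then lam * ∑ k ∈ cycIcc a b, M i k * M k b else 0)
      - (if b = i then lam * ∑ k ∈ cycIcc a b, M a k * M k (i + 1) else 0)
      - (if a = i + 1 ∧ b = i then lam ^ 2 * ∑ k ∈ cycIcc a b, M i k * M k (i + 1) else 0)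
      + ((if i + 1 ∈ cycIcc a b then lam * (M a (i + 1) * M i b) else 0)
        - (if i ∈ cycIcc a b then lam * (M a (i + 1) * M i b) else 0)) := by
  simp only [cprod_apply_s18, sweep_apply_mul_sweep_apply lam hi h0, sum_add_distrib, sum_sub_distrib,
    sum_ite_eq']
  split_ifs <;> simp [mul_sum]

end Sweep

section SquareZero

variable {N : ℕ} [NeZero N] {i : Fin N} {M : Matrix (Fin N) (Fin N) ℂ}

lemma sum_cycIcc_add_one_left_eq_zero (hN : 2 ≤ N) (hMM : cprod M M = 0) (hii : M i i = 0)
    {b : Fin N} (hb : b ≠ i) : ∑ k ∈ cycIcc (i + 1) b, M i k * M k b = 0 := by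
  have h := congrFun (congrFun hMM i) b
  rwa [Matrix.zero_apply, cprod_apply_s18, cycIcc_eq_insert_cycIcc_add_one hN hb,
    sum_insert (self_notMem_cycIcc_add_one hN hb), hii, zero_mul, zero_add] at h

lemma sum_cycIcc_self_right_eq_zero (hN : 2 ≤ N) (hMM : cprod M M = 0)
    (hii : M (i + 1) (i + 1) = 0) {a : Fin N} (ha : a ≠ i + 1) :
    ∑ k ∈ cycIcc a i, M a k * M k (i + 1) = 0 := by
  have h := congrFun (congrFun hMM a) (i + 1)
  rwa [Matrix.zero_apply, cprod_apply_s18, cycIcc_add_one_eq_insert_cycIcc hN ha,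
    sum_insert (add_one_notMem_cycIcc_self hN ha), hii, mul_zero, zero_add] at h

theorem cprod_sweep_sweep (hN : 2 ≤ N) (lam : ℂ) (hMM : cprod M M = 0) (hii : M i i = 0)
    (hii' : M (i + 1) (i + 1) = 0) (h0 : M i (i + 1) = 0) :
    cprod (sweep i lam M) (sweep i lam M) = single (i + 1) i
      (lam * ((M * M) i i - (M * M) (i + 1) (i + 1) - lam * (M * M) i (i + 1))) := by
  ext a b
  have hcross : (if i + 1 ∈ cycIcc a b then lam * (M a (i + 1) * M i b) else 0)
      = if i ∈ cycIcc a b then lam * (M a (i + 1) * M i b) else 0 := by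
    by_cases ha : a = i + 1
    · simp [ha, hii']
    by_cases hb : b = i
    · simp [hb, hii]
    exact if_congr (add_one_mem_cycIcc_iff hN ha hb) rfl rfl
  rw [cprod_sweep_sweep_apply lam (Fin.ne_add_one_self hN) h0, hMM, hcross, single_apply,
    Matrix.zero_apply, sub_self, add_zero, zero_add]
  by_cases ha : a = i + 1 <;> by_cases hb : b = i
  · subst ha hb
    simp only [↓reduceIte, and_self, cycIcc_add_one_self_eq_univ hN, mul_apply]
    ring
  · simp [ha, hb, Ne.symm hb, sum_cycIcc_add_one_left_eq_zero hN hMM hii hb]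
  · simp [ha, hb, Ne.symm ha, sum_cycIcc_self_right_eq_zero hN hMM hii' ha]
  · simp [ha, hb, Ne.symm ha]

end SquareZero

/-- The heart of the Bott–Samelson sweep: let `M` have zero diagonal, `M • M = 0` and
`M_{i,i+1} = 0` (indices mod `N`), and set `N' = M + λ [e^{i+1,i}, M]` (ordinary
commutator).  Then `(N' • N')_{jm} = λ δ_{j,i+1} δ_{m,i} ((M²)_{ii} − (M²)_{i+1,i+1} −
λ (M²)_{i,i+1})`; in particular `N' • N'` vanishes away from the `(i+1,i)` entry, and
`N' • N' = 0` iff `λ = 0` or `λ (M²)_{i,i+1} = (M²)_{ii} − (M²)_{i+1,i+1}`. -/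
theorem brauer_sweep_square (N : ℕ) [NeZero N] (hN : 2 ≤ N) (i : Fin N) (lam : ℂ)
    (M : Matrix (Fin N) (Fin N) ℂ)
    (hdiag : ∀ j, M j j = 0) (hMM : cprod M M = 0) (h0 : M i (i + 1) = 0) :
    (∀ j m : Fin N,
      cprod (M + lam • (Matrix.single (i + 1) i (1 : ℂ) * M -
                        M * Matrix.single (i + 1) i (1 : ℂ)))
            (M + lam • (Matrix.single (i + 1) i (1 : ℂ) * M -
                        M * Matrix.single (i + 1) i (1 : ℂ))) j m =
        if j = i + 1 ∧ m = i then
          lam * ((M * M) i i - (M * M) (i + 1) (i + 1) - lam * (M * M) i (i + 1))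
        else 0) ∧
    (cprod (M + lam • (Matrix.single (i + 1) i (1 : ℂ) * M -
                       M * Matrix.single (i + 1) i (1 : ℂ)))
           (M + lam • (Matrix.single (i + 1) i (1 : ℂ) * M -
                       M * Matrix.single (i + 1) i (1 : ℂ))) = 0 ↔
      (lam = 0 ∨
        lam * (M * M) i (i + 1) = (M * M) i i - (M * M) (i + 1) (i + 1))) := by
  have h := cprod_sweep_sweep hN lam hMM (hdiag i) (hdiag (i + 1)) h0
  simp only [sweep] at h
  rw [h]
  refine ⟨fun j m => by simp only [single_apply, eq_comm], ?_⟩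
  rw [single_eq_zero_iff, mul_eq_zero, sub_eq_zero, eq_comm (b := lam * _)]
end

section
/- Fix a positive integer N. Consider the set D_1 = {M ∈ M_N(ℂ) : M² = 0} of square-zero N×N complex matrices (ordinary matrix square). Then the vanishing ideal of D_1 in the polynomial ring ℂ[x_{ij} : 1 ≤ i, j ≤ N], namely I(D_1) = {p : p(M) = 0 for every M ∈ D_1 (where p(M) means evaluating the variables x_{ij} at the entries M_{ij})}, is a prime ideal. Equivalently, the affine variety of square-zero matrices is irreducible. -/
/-!
Every square-zero matrix `M` of size `n` factors as `M = B * A` with `A : r × n`, `D, B : n × r`,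
`r = ⌊n/2⌋`, `A * D = 1` and `A * B = 0`: take for `A` a surjection onto `K^r` whose kernel lies
between `range M` and `ker M`, for `D` a section of it and `B = M * D`. Conversely, for arbitrary
`A, D, B` the matrix `E = det (A D) • B - D * adj (A D) * A * B` satisfies `A * E = 0`, so
`(E * A)² = 0`, and `E * A = B * A` in the situation above. Hence the square-zero matrices form
the image of an affine space under a polynomial map, and the vanishing ideal of such an image is
the kernel of the corresponding homomorphism into a polynomial ring, hence prime.
-/

open Module MvPolynomial

namespace MvPolynomial

variable {K σ τ : Type*} [Field K] [Infinite K]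

theorem vanishingIdeal_range_aeval_eq_ker_bind₁ (F : σ → MvPolynomial τ K) :
    vanishingIdeal K (Set.range fun (x : τ → K) (s : σ) => aeval x (F s)) =
      RingHom.ker (bind₁ F) := by
  ext p
  simp only [mem_vanishingIdeal_iff, Set.forall_mem_range, RingHom.mem_ker,
    MvPolynomial.funext_iff (p := bind₁ F p), ← coe_aeval_eq_eval, AlgHom.coe_toRingHom,
    aeval_bind₁, map_zero]

theorem isPrime_vanishingIdeal_range_aeval (F : σ → MvPolynomial τ K) :
    (vanishingIdeal K (Set.range fun (x : τ → K) (s : σ) => aeval x (F s))).IsPrime := by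
  rw [vanishingIdeal_range_aeval_eq_ker_bind₁]
  exact RingHom.ker_isPrime _

end MvPolynomial

theorem Submodule.exists_le_le_finrank_eq {K V : Type*} [DivisionRing K] [AddCommGroup V]
    [Module K V] [FiniteDimensional K V] {p q : Submodule K V} (hpq : p ≤ q) {n : ℕ}
    (hp : finrank K p ≤ n) (hq : n ≤ finrank K q) :
    ∃ W : Submodule K V, p ≤ W ∧ W ≤ q ∧ finrank K W = n := by
  induction n with
  | zero => exact ⟨p, le_rfl, hpq, by omega⟩
  | succ n ih =>
    rcases hp.eq_or_lt with hpn | hpn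
    · exact ⟨p, le_rfl, hpq, hpn⟩
    obtain ⟨W, hpW, hWq, hW⟩ := ih (by omega) (by omega)
    obtain ⟨x, hxq, hxW⟩ : ∃ x ∈ q, x ∉ W := SetLike.not_le_iff_exists.mp fun hqW => by
      have := Submodule.finrank_mono hqW
      omega
    exact ⟨W ⊔ span K {x}, hpW.trans le_sup_left,
      sup_le hWq ((span_singleton_le_iff_mem _ _).mpr hxq),
      by rw [finrank_sup_span_singleton hxW, hW]⟩

namespace LinearMap

variable {K V U : Type*} [Field K] [AddCommGroup V] [Module K V] [FiniteDimensional K V]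
  [AddCommGroup U] [Module K U] [FiniteDimensional K U]

theorem exists_comp_eq_of_range_le_ker {f : V →ₗ[K] V} (hf : range f ≤ ker f)
    (hU : finrank K (range f) ≤ finrank K U) (hU' : finrank K U ≤ finrank K (ker f)) :
    ∃ (α : V →ₗ[K] U) (δ : U →ₗ[K] V), α ∘ₗ δ = id ∧ α ∘ₗ f = 0 ∧ f ∘ₗ δ ∘ₗ α = f := by
  have hrn := f.finrank_range_add_finrank_ker
  obtain ⟨W, hfW, hWf, hW⟩ :=
    Submodule.exists_le_le_finrank_eq hf (n := finrank K V - finrank K U) (by omega) (by omega)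
  have hWU : finrank K (V ⧸ W) = finrank K U := by
    have := W.finrank_quotient_add_finrank
    omega
  let α : V →ₗ[K] U := (LinearEquiv.ofFinrankEq _ _ hWU).toLinearMap ∘ₗ W.mkQ
  have hα : ker α = W := by
    simp [α, ker_comp, Submodule.ker_mkQ]
  obtain ⟨δ, hδ⟩ := α.exists_rightInverse_of_surjective (by simp [α, range_comp])
  refine ⟨α, δ, hδ, ext fun x => ?_, ext fun x => ?_⟩
  · exact (hα ▸ hfW) (mem_range_self f x)
  · have : δ (α x) - x ∈ ker α := by simp [← comp_apply α δ, hδ]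
    simpa [sub_eq_zero] using (hWf (hα ▸ this) : f (δ (α x) - x) = 0)

end LinearMap

namespace Matrix

section CommRing

variable {ι κ R S : Type*} [Fintype ι] [Fintype κ] [DecidableEq κ] [CommRing R] [CommRing S]

def squareZeroParam (A : Matrix κ ι R) (D B : Matrix ι κ R) : Matrix ι ι R :=
  ((A * D).det • B - D * adjugate (A * D) * A * B) * A

theorem squareZeroParam_mul_self (A : Matrix κ ι R) (D B : Matrix ι κ R) :
    squareZeroParam A D B * squareZeroParam A D B = 0 := by
  set E := (A * D).det • B - D * adjugate (A * D) * A * B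
  have hAE : A * E = 0 := by
    simp only [E, Matrix.mul_sub, Matrix.mul_smul, ← Matrix.mul_assoc, mul_adjugate,
      Matrix.smul_mul, Matrix.one_mul, sub_self]
  rw [squareZeroParam, Matrix.mul_assoc, ← Matrix.mul_assoc A, hAE, Matrix.zero_mul,
    Matrix.mul_zero]

theorem squareZeroParam_of_mul_eq_one {A : Matrix κ ι R} {D B : Matrix ι κ R}
    (hAD : A * D = 1) (hAB : A * B = 0) : squareZeroParam A D B = B * A := by
  rw [squareZeroParam, hAD, det_one, one_smul, adjugate_one, Matrix.mul_one, Matrix.mul_assoc D,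
    hAB, Matrix.mul_zero, sub_zero]

theorem map_squareZeroParam (f : R →+* S) (A : Matrix κ ι R) (D B : Matrix ι κ R) :
    (squareZeroParam A D B).map f = squareZeroParam (A.map f) (D.map f) (B.map f) := by
  have hdet : f (A * D).det = (A.map f * D.map f).det := by
    simpa [Matrix.map_mul] using f.map_det (A * D)
  have hadj : (adjugate (A * D)).map f = adjugate (A.map f * D.map f) := by
    simpa [Matrix.map_mul] using f.map_adjugate (A * D)
  rw [squareZeroParam, squareZeroParam, Matrix.map_mul, Matrix.map_sub _ (map_sub f),
    Matrix.map_smulₛₗ _ f _ (map_mul f _), hdet, Matrix.map_mul, Matrix.map_mul, Matrix.map_mul,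
    hadj]

def squareZeroParamFun (y : (κ × ι) ⊕ (ι × κ) ⊕ (ι × κ) → R) : Matrix ι ι R :=
  squareZeroParam (of fun i j => y (.inl (i, j))) (of fun i j => y (.inr (.inl (i, j))))
    (of fun i j => y (.inr (.inr (i, j))))

theorem map_squareZeroParamFun (f : R →+* S) (y : (κ × ι) ⊕ (ι × κ) ⊕ (ι × κ) → R) :
    (squareZeroParamFun y).map f = squareZeroParamFun (f ∘ y) :=
  map_squareZeroParam f _ _ _

theorem aeval_squareZeroParamFun_X (x : (κ × ι) ⊕ (ι × κ) ⊕ (ι × κ) → R) (i j : ι) :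
    aeval x (squareZeroParamFun (X : _ → MvPolynomial _ R) i j) = squareZeroParamFun x i j := by
  have hx : (aeval (R := R) x).toRingHom ∘ X = x := funext (aeval_X x)
  conv_rhs => rw [← hx, ← map_squareZeroParamFun]
  rfl

end CommRing

section Field

variable {ι κ K : Type*} [Fintype ι] [DecidableEq ι] [Fintype κ] [DecidableEq κ] [Field K]

theorem exists_mul_eq_one_of_mul_self_eq_zero (hκ : Fintype.card κ = Fintype.card ι / 2)
    {M : Matrix ι ι K} (hM : M * M = 0) :
    ∃ (A : Matrix κ ι K) (D B : Matrix ι κ K), A * D = 1 ∧ A * B = 0 ∧ B * A = M := by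
  have hf : LinearMap.range (toLin' M) ≤ LinearMap.ker (toLin' M) := by
    rintro _ ⟨x, rfl⟩
    rw [LinearMap.mem_ker, ← LinearMap.comp_apply, ← toLin'_mul, hM, map_zero,
      LinearMap.zero_apply]
  have hrn := (toLin' M).finrank_range_add_finrank_ker
  have hr := Submodule.finrank_mono hf
  simp only [finrank_fintype_fun_eq_card] at hrn
  obtain ⟨α, δ, hαδ, hαf, hfδα⟩ := LinearMap.exists_comp_eq_of_range_le_ker hf
    (U := κ → K) (by simp only [finrank_fintype_fun_eq_card]; omega)
    (by simp only [finrank_fintype_fun_eq_card]; omega)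
  refine ⟨α.toMatrix', δ.toMatrix', M * δ.toMatrix', ?_, ?_, ?_⟩ <;> apply toLin'.injective
  · simpa [toLin'_mul] using hαδ
  · simp [toLin'_mul, ← LinearMap.comp_assoc, hαf]
  · simpa [toLin'_mul, LinearMap.comp_assoc] using hfδα

theorem range_squareZeroParamFun (hκ : Fintype.card κ = Fintype.card ι / 2) :
    Set.range (squareZeroParamFun (κ := κ) (ι := ι) (R := K)) = {M | M * M = 0} := by
  refine subset_antisymm ?_ fun M hM => ?_
  · rintro _ ⟨y, rfl⟩
    exact squareZeroParam_mul_self _ _ _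
  · obtain ⟨A, D, B, hAD, hAB, rfl⟩ := exists_mul_eq_one_of_mul_self_eq_zero hκ hM
    exact ⟨Sum.elim (fun p => A p.1 p.2) (Sum.elim (fun p => D p.1 p.2) (fun p => B p.1 p.2)),
      squareZeroParam_of_mul_eq_one hAD hAB⟩

theorem setOf_mul_self_eq_zero_eq_range_aeval (hκ : Fintype.card κ = Fintype.card ι / 2) :
    {f : ι × ι → K | (of fun i j => f (i, j)) * (of fun i j => f (i, j)) = 0} =
      Set.range fun x (ij : ι × ι) =>
        aeval x (squareZeroParamFun (κ := κ) (X : _ → MvPolynomial _ K) ij.1 ij.2) := by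
  ext f
  have hrange := congrArg (of (fun i j => f (i, j)) ∈ ·) (range_squareZeroParamFun hκ)
  simp only [Set.mem_ofPred_eq, Set.mem_range, aeval_squareZeroParamFun_X] at hrange ⊢
  rw [← hrange]
  refine exists_congr fun y => ?_
  simp [← Matrix.ext_iff, funext_iff, Prod.forall]

end Field

end Matrix

theorem squareZero_vanishingIdeal_isPrime_general (N : ℕ) :
    (MvPolynomial.vanishingIdeal ℂ
      {f : Fin N × Fin N → ℂ |
        (Matrix.of fun i j => f (i, j)) * (Matrix.of fun i j => f (i, j)) = 0}).IsPrime := by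
  rw [Matrix.setOf_mul_self_eq_zero_eq_range_aeval (κ := Fin (N / 2)) (by simp)]
  exact isPrime_vanishingIdeal_range_aeval _

/-- The affine variety `D₁ = {M ∈ M_N(ℂ) : M² = 0}` of square-zero matrices is
irreducible: the vanishing ideal of `D₁` in the polynomial ring
`ℂ[x_{ij} : 1 ≤ i,j ≤ N]` (polynomials vanishing at every square-zero matrix, the
variables being evaluated at the matrix entries) is a prime ideal. -/
theorem squareZero_vanishingIdeal_isPrime (N : ℕ) (hN : 0 < N) :
    (MvPolynomial.vanishingIdeal ℂ
      {f : Fin N × Fin N → ℂ |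
        (Matrix.of fun i j => f (i, j)) * (Matrix.of fun i j => f (i, j)) = 0}).IsPrime :=
  squareZero_vanishingIdeal_isPrime_general N
end
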